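/- Let the deadlines be d(i) = s + (i−1)·L + δ for a startup delay s ∈ ℕ, chunk duration L ≥ 1, and common stall δ ∈ ℕ. All C chunks admit a feasible single-link schedule (each chunk of size Y downloaded by its deadline, respecting per-slot bandwidth and the contribution cap) if and only if i·Y ≤ min(η, R(s + (i−1)·L + δ)) for every i ∈ {1,…,C}. -/
import Mathlib


/-- Cumulative bandwidth of the link up to time `t`: `R(t) = Σ_{j=1}^t B(j)`. -/
noncomputable def cumBW (B : ℕ → ℝ) (t : ℕ) : ℝ := ∑ j ∈ Finset.Icc 1 t, B j

/-- A feasible single-link schedule for a set `S` of chunks: download amounts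
`z i j ≥ 0` so that each chunk `i ∈ S` gets its full layer of size `Y` by its
deadline `d i`, respecting the per-slot bandwidth `B` and the maximum
contribution `η`. -/
def FeasibleSchedule (Y : ℝ) (d : ℕ → ℕ) (B : ℕ → ℝ) (η : ℝ) (S : Finset ℕ) : Prop :=
  ∃ z : ℕ → ℕ → ℝ,
    (∀ i ∈ S, ∀ j, 0 ≤ z i j) ∧
    (∀ i ∈ S, ∑ j ∈ Finset.Icc 1 (d i), z i j = Y) ∧
    (∀ i ∈ S, ∀ j, (j < 1 ∨ d i < j) → z i j = 0) ∧
    (∀ j, 1 ≤ j → ∑ i ∈ S, z i j ≤ B j) ∧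
    (∑ i ∈ S, ∑ j ∈ Finset.Icc 1 (d i), z i j ≤ η)

lemma cumBW_zero (B : ℕ → ℝ) : cumBW B 0 = 0 := by simp [cumBW]

lemma cumBW_mono (B : ℕ → ℝ) (hB : ∀ j, 1 ≤ j → 0 ≤ B j) {a b : ℕ} (h : a ≤ b) :
    cumBW B a ≤ cumBW B b := by
  apply Finset.sum_le_sum_of_subset_of_nonneg (Finset.Icc_subset_Icc_right h)
  intro j hj _
  exact hB j (Finset.mem_Icc.mp hj).1

lemma cumBW_nonneg (B : ℕ → ℝ) (hB : ∀ j, 1 ≤ j → 0 ≤ B j) (t : ℕ) : 0 ≤ cumBW B t := by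
  have := cumBW_mono B hB (Nat.zero_le t)
  rwa [cumBW_zero] at this

lemma cumBW_succ (B : ℕ → ℝ) {j : ℕ} (hj : 1 ≤ j) :
    cumBW B j = cumBW B (j - 1) + B j := by
  obtain ⟨k, rfl⟩ : ∃ k, j = k + 1 := ⟨j - 1, by omega⟩
  simp [cumBW, Finset.sum_Icc_succ_top (by omega : 1 ≤ k + 1)]

lemma clamp_eq {a b : ℝ} (t : ℝ) (hab : a ≤ b) :
    max a (min b t) = a + (min b t - min a t) := by
  rcases le_total t a with h | h
  · rw [min_eq_right (h.trans hab), min_eq_right h, max_eq_left h]; ring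
  · rw [min_eq_left h, max_eq_right (le_min hab h)]; ring

lemma zform {a b x y : ℝ} (hab : a ≤ b) (hyx : y ≤ x) :
    max 0 (min b x - max a y) = max a (min b x) - max a (min b y) := by
  rcases le_total x a with h | h
  · rw [min_eq_right (h.trans hab), min_eq_right ((hyx.trans h).trans hab),
      max_eq_left (hyx.trans h), max_eq_left h,
      max_eq_left (by linarith : x - a ≤ 0)]
    ring
  · rcases le_total b y with h' | h'
    · rw [min_eq_left (h'.trans hyx), min_eq_left h',
        max_eq_left (show b - max a y ≤ 0 by have := le_max_right a y; linarith)]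
      ring
    · have h1 : a ≤ min b x := le_min hab h
      have h2 : max a y ≤ min b x := max_le h1 (le_min h' hyx)
      rw [min_eq_right h', max_eq_right h1,
        max_eq_right (by linarith : (0:ℝ) ≤ min b x - max a y)]

lemma tele (f : ℕ → ℝ) (n : ℕ) :
    ∑ j ∈ Finset.Icc 1 n, (f j - f (j - 1)) = f n - f 0 := by
  induction n with
  | zero => simp
  | succ k ih =>
    rw [Finset.sum_Icc_succ_top (by omega : 1 ≤ k + 1), ih]
    simp only [Nat.add_sub_cancel]
    ring

/-- With deadlines `d(i) = s + (i−1)·L + δ`, all `C` chunks admit a feasible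
single-link schedule iff `i·Y ≤ min(η, R(s + (i−1)·L + δ))` for every
`i ∈ {1,…,C}`. -/
theorem all_chunks_feasible_iff
    (C : ℕ) (Y : ℝ) (hY : 0 < Y)
    (s L δ : ℕ) (hL : 1 ≤ L)
    (B : ℕ → ℝ) (hB : ∀ j, 1 ≤ j → 0 ≤ B j)
    (η : ℝ) (hη : 0 ≤ η) :
    FeasibleSchedule Y (fun i => s + (i - 1) * L + δ) B η (Finset.Icc 1 C) ↔
      ∀ i ∈ Finset.Icc 1 C,
        (i : ℝ) * Y ≤ min η (cumBW B (s + (i - 1) * L + δ)) := by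
  set d : ℕ → ℕ := fun i => s + (i - 1) * L + δ with hd
  have hdmono : ∀ {k i : ℕ}, k ≤ i → d k ≤ d i := by
    intro k i hki
    simp only [hd]
    have : (k - 1) * L ≤ (i - 1) * L := Nat.mul_le_mul_right L (by omega)
    omega
  constructor
  · rintro ⟨z, hz0, hzY, hzd, hzB, hzη⟩ i hi
    obtain ⟨hi1, hiC⟩ := Finset.mem_Icc.mp hi
    have htotal : ∑ k ∈ Finset.Icc 1 C, ∑ j ∈ Finset.Icc 1 (d k), z k j = (C : ℝ) * Y := by
      rw [Finset.sum_congr rfl (fun k hk => hzY k hk), Finset.sum_const, Nat.card_Icc]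
      simp [mul_comm]
    refine le_min ?_ ?_
    · have hCη : (C : ℝ) * Y ≤ η := by rw [← htotal]; exact hzη
      have : (i : ℝ) * Y ≤ (C : ℝ) * Y :=
        mul_le_mul_of_nonneg_right (by exact_mod_cast hiC) hY.le
      linarith
    · -- i·Y ≤ R(d i)
      have hkey : ∀ k ∈ Finset.Icc 1 i, ∑ j ∈ Finset.Icc 1 (d i), z k j = Y := by
        intro k hk
        obtain ⟨hk1, hki⟩ := Finset.mem_Icc.mp hk
        have hkC : k ∈ Finset.Icc 1 C := Finset.mem_Icc.mpr ⟨hk1, hki.trans hiC⟩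
        rw [← hzY k hkC]
        apply (Finset.sum_subset (Finset.Icc_subset_Icc_right (hdmono hki)) _).symm
        intro j hj hj2
        apply hzd k hkC j
        right
        rw [Finset.mem_Icc] at hj hj2
        omega
      have h1 : (i : ℝ) * Y = ∑ k ∈ Finset.Icc 1 i, ∑ j ∈ Finset.Icc 1 (d i), z k j := by
        rw [Finset.sum_congr rfl hkey, Finset.sum_const, Nat.card_Icc]
        simp [mul_comm]
      rw [h1, Finset.sum_comm]
      calc ∑ j ∈ Finset.Icc 1 (d i), ∑ k ∈ Finset.Icc 1 i, z k j
          ≤ ∑ j ∈ Finset.Icc 1 (d i), ∑ k ∈ Finset.Icc 1 C, z k j := by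
            apply Finset.sum_le_sum
            intro j _
            apply Finset.sum_le_sum_of_subset_of_nonneg
              (Finset.Icc_subset_Icc_right hiC)
            intro k hk _
            exact hz0 k hk j
        _ ≤ ∑ j ∈ Finset.Icc 1 (d i), B j := by
            apply Finset.sum_le_sum
            intro j hj
            exact hzB j (Finset.mem_Icc.mp hj).1
        _ = cumBW B (d i) := rfl
  · intro h
    rcases Nat.eq_zero_or_pos C with rfl | hC
    · refine ⟨fun _ _ => 0, ?_, ?_, ?_, ?_, ?_⟩ <;> simp [hB, hη]
      intro j hj; exact hB j hj
    set z : ℕ → ℕ → ℝ := fun i j =>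
      max 0 (min ((i : ℝ) * Y) (cumBW B j) - max (((i : ℝ) - 1) * Y) (cumBW B (j - 1)))
      with hz
    have hab : ∀ i : ℕ, ((i : ℝ) - 1) * Y ≤ (i : ℝ) * Y := by
      intro i
      have : (i : ℝ) - 1 ≤ (i : ℝ) := by linarith
      exact mul_le_mul_of_nonneg_right this hY.le
    have hyx : ∀ j : ℕ, cumBW B (j - 1) ≤ cumBW B j := fun j => cumBW_mono B hB (by omega)
    -- z i j written as a telescoping difference in j
    have hzf : ∀ i j : ℕ, z i j =
        (fun j => max (((i : ℝ) - 1) * Y) (min ((i : ℝ) * Y) (cumBW B j))) j -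
        (fun j => max (((i : ℝ) - 1) * Y) (min ((i : ℝ) * Y) (cumBW B j))) (j - 1) := by
      intro i j
      exact zform (hab i) (hyx j)
    -- per-chunk sum equals Y up to any T with i·Y ≤ R T
    have hsumY : ∀ i : ℕ, 1 ≤ i → ∀ T : ℕ, (i : ℝ) * Y ≤ cumBW B T →
        ∑ j ∈ Finset.Icc 1 T, z i j = Y := by
      intro i hi1 T hT
      rw [Finset.sum_congr rfl (fun j _ => hzf i j),
        tele (fun j => max (((i : ℝ) - 1) * Y) (min ((i : ℝ) * Y) (cumBW B j))) T]
      have hi0 : (0 : ℝ) ≤ ((i : ℝ) - 1) * Y := by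
        apply mul_nonneg _ hY.le
        have : (1 : ℝ) ≤ (i : ℝ) := by exact_mod_cast hi1
        linarith
      have hb0 : (0 : ℝ) ≤ (i : ℝ) * Y := by positivity
      rw [cumBW_zero, min_eq_right hb0, max_eq_left hi0, min_eq_left hT,
        max_eq_right (hab i)]
      ring
    have hhR : ∀ i ∈ Finset.Icc 1 C, (i : ℝ) * Y ≤ cumBW B (d i) := fun i hi =>
      (h i hi).trans (min_le_right _ _)
    refine ⟨z, ?_, ?_, ?_, ?_, ?_⟩
    · intro i _ j; exact le_max_left _ _
    · intro i hi
      exact hsumY i (Finset.mem_Icc.mp hi).1 (d i) (hhR i hi)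
    · intro i hi j hj
      obtain ⟨hi1, hiC⟩ := Finset.mem_Icc.mp hi
      have hi0 : (0 : ℝ) ≤ ((i : ℝ) - 1) * Y := by
        apply mul_nonneg _ hY.le
        have : (1 : ℝ) ≤ (i : ℝ) := by exact_mod_cast hi1
        linarith
      rcases hj with hj | hj
      · -- j = 0
        interval_cases j
        simp only [hz, Nat.zero_sub, cumBW_zero]
        have h1 : min ((i : ℝ) * Y) 0 ≤ 0 := min_le_right _ _
        have h2 : (0 : ℝ) ≤ max (((i : ℝ) - 1) * Y) 0 := le_max_right _ _
        exact max_eq_left (by linarith)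
      · -- d i < j
        have hR1 : (i : ℝ) * Y ≤ cumBW B (j - 1) :=
          (hhR i hi).trans (cumBW_mono B hB (by omega))
        simp only [hz]
        apply max_eq_left
        have h1 : min ((i : ℝ) * Y) (cumBW B j) ≤ (i : ℝ) * Y := min_le_left _ _
        have h2 : cumBW B (j - 1) ≤ max (((i : ℝ) - 1) * Y) (cumBW B (j - 1)) :=
          le_max_right _ _
        linarith
    · intro j hj
      set x := cumBW B j
      set y := cumBW B (j - 1)
      have hyx' : y ≤ x := hyx j
      set F : ℕ → ℝ := fun k => min ((k : ℝ) * Y) x - min ((k : ℝ) * Y) y with hF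
      have hstep : ∀ i ∈ Finset.Icc 1 C, z i j = F i - F (i - 1) := by
        intro i hi
        obtain ⟨hi1, _⟩ := Finset.mem_Icc.mp hi
        have hcast : ((i - 1 : ℕ) : ℝ) = (i : ℝ) - 1 := by
          rw [Nat.cast_sub hi1, Nat.cast_one]
        rw [hzf i j]
        simp only
        rw [clamp_eq x (hab i), clamp_eq y (hab i), hF]
        simp only [hcast]
        ring
      rw [Finset.sum_congr rfl hstep, tele F C]
      have hF0 : F 0 = 0 := by
        have hx : 0 ≤ x := cumBW_nonneg B hB j
        have hy : 0 ≤ y := cumBW_nonneg B hB (j - 1)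
        simp only [hF, Nat.cast_zero, zero_mul, min_eq_left hx, min_eq_left hy]
        ring
      rw [hF0, sub_zero]
      have hBj : x = y + B j := cumBW_succ B hj
      have : F C ≤ x - y := by
        simp only [hF]
        rcases le_total ((C : ℝ) * Y) y with h' | h'
        · have h1 : min ((C : ℝ) * Y) x ≤ (C : ℝ) * Y := min_le_left _ _
          rw [min_eq_left h']
          linarith
        · rw [min_eq_right h']
          have h1 : min ((C : ℝ) * Y) x ≤ x := min_le_right _ _
          linarith
      linarith
    · -- total ≤ η
      have : ∑ i ∈ Finset.Icc 1 C, ∑ j ∈ Finset.Icc 1 (d i), z i j = (C : ℝ) * Y := by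
        rw [Finset.sum_congr rfl
          (fun i hi => hsumY i (Finset.mem_Icc.mp hi).1 (d i) (hhR i hi)),
          Finset.sum_const, Nat.card_Icc]
        simp [mul_comm]
      rw [this]
      have hCmem : C ∈ Finset.Icc 1 C := Finset.mem_Icc.mpr ⟨hC, le_refl C⟩
      exact (h C hCmem).trans (min_le_left _ _)
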